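/- arXiv:2203.03842 — 3 statements merged into one kernel-verified Lean document; each statement's English description precedes it below -/
import Mathlib

section
/- The composite 𝕜-algebra homomorphism 𝕜[x_w : w basic] → R̄_0 → R̄_0/⟨F̄_{m,u} : u ∈ Iᵐ_{d,n}⟩ (inclusion of the polynomial subring on the basic variables followed by the quotient map) is an isomorphism. In particular, the quotient R̄_0/⟨F̄_{m,u} : u ∈ Iᵐ_{d,n}⟩ is a polynomial ring over 𝕜 in the d(n−d) basic variables and the ideal ⟨F̄_{m,u} : u ∈ Iᵐ_{d,n}⟩ is prime. (This is the algebraic content of: the chart U_m ∩ Gr^{d,E} of the Grassmannian in its Plücker embedding is defined inside the affine chart U_m by the m-primary Plücker relations and is canonically an affine space with the basic Plücker variables as coordinates.) -/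
/-!
Order the variables `x_w` by `|w \ m|`. The relation `F̄_{m,u}` is `±x_u` plus products
`x_{uʳmᵢ} x_{u₀(m∖mᵢ)}` of variables of smaller order (`|u \ m| - 1` and `1`), so the relations
form a triangular system. Solving it recursively writes every `x_w` as a polynomial in the basic
variables; substituting these polynomials is a retraction `R̄₀ → 𝕜[x_w : w basic]` that kills
the relations and inverts the composite map, whose source is a domain.
-/

open MvPolynomial

namespace Resolution

/-- `I_{d,n}`: the set of `d`-element subsets of `{1,…,n}` (modeled on `Fin n`),
indexing the Plücker variables `p_w`. -/
abbrev Idx (d n : ℕ) : Type := {w : Finset (Fin n) // w.card = d}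

variable (𝕜 : Type) [Field 𝕜] (d : ℕ) {n : ℕ}

/-- The symbol `p_{w₁ ⋯ w_k a}` for the index list consisting of the elements of `S` in
increasing order followed by `a`: it is `0` if the entries repeat (i.e. `a ∈ S`), and
otherwise it is `(-1)^{#{x ∈ S | a < x}} · p_{insert a S}`, the sign being that of the
permutation sorting the list. -/
noncomputable def pApp (S : Finset (Fin n)) (a : Fin n) : MvPolynomial (Idx d n) 𝕜 :=
  if h : a ∉ S ∧ (insert a S).card = d then
    ((-1 : 𝕜) ^ (S.filter fun x => a < x).card) • X ⟨insert a S, h.2⟩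
  else 0

/-- The symbol `p_{a w₁ ⋯ w_k}` for the index list consisting of `a` followed by the
elements of `S` in increasing order:  it is `0` if the entries repeat, and otherwise it is
`(-1)^{#{x ∈ S | x < a}} · p_{insert a S}`. -/
noncomputable def pPre (a : Fin n) (S : Finset (Fin n)) : MvPolynomial (Idx d n) 𝕜 :=
  if h : a ∉ S ∧ (insert a S).card = d then
    ((-1 : 𝕜) ^ (S.filter fun x => x < a).card) • X ⟨insert a S, h.2⟩
  else 0

/-- The `m`-primary Plücker relation
`F_{m,u} = p_m p_{uʳu₀} + ∑_{i=1}^d (-1)^i p_{uʳmᵢ} p_{u₀(m∖mᵢ)}`,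
where `u₀ = min (u \ m)`, `uʳ = u.erase u₀` and `m₁ < ⋯ < m_d` lists `m`.
(It is defined to be `0` unless `m.card = d`, `u.card = d` and `2 ≤ (u \ m).card`,
i.e. unless `u ∈ Iᵐ_{d,n}`.) -/
noncomputable def Fmu (m u : Finset (Fin n)) : MvPolynomial (Idx d n) 𝕜 :=
  if h : m.card = d ∧ u.card = d ∧ 2 ≤ (u \ m).card then
    let u0 : Fin n := (u \ m).min' (Finset.card_pos.mp (lt_of_lt_of_le two_pos h.2.2))
    X ⟨m, h.1⟩ * pApp 𝕜 d (u.erase u0) u0 +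
      ∑ i : Fin d, ((-1 : 𝕜) ^ ((i : ℕ) + 1)) •
        (pApp 𝕜 d (u.erase u0) ((m.orderIsoOfFin h.1 i).1) *
          pPre 𝕜 d u0 (m.erase ((m.orderIsoOfFin h.1 i).1)))
  else 0

/-- The rank of an `m`-primary Plücker relation: (number of nonzero terms) − 3. -/
noncomputable def rank {𝕜 : Type} [Field 𝕜] {d n : ℕ} (F : MvPolynomial (Idx d n) 𝕜) : ℕ :=
  F.support.card - 3

/-- The index set `I_{d,n} ∖ {m}` of the variables `x_w` of the dehomogenized
(with respect to the chart `p_m = 1`) polynomial ring `R̄₀`. -/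
abbrev BIdx (d : ℕ) {n : ℕ} (m : Finset (Fin n)) : Type := {w : Idx d n // w.val ≠ m}

/-- Dehomogenization with respect to the chart `p_m = 1`: the `𝕜`-algebra map
`R₀ = 𝕜[p_w : w ∈ I_{d,n}] → R̄₀ = 𝕜[x_w : w ∈ I_{d,n} ∖ {m}]`, `p_m ↦ 1`, `p_w ↦ x_w`. -/
noncomputable def dehom (m : Finset (Fin n)) :
    MvPolynomial (Idx d n) 𝕜 →ₐ[𝕜] MvPolynomial (BIdx d m) 𝕜 :=
  aeval fun w => if h : w.val = m then 1 else X ⟨w, h⟩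


/-- The set of basic indices: `w ∈ I_{d,n}` with `|w ∖ m| = 1`, i.e.
`w = (m ∖ {mᵢ}) ∪ {a}` for some `mᵢ ∈ m`, `a ∈ [n] ∖ m`. -/
abbrev Basic (d : ℕ) {n : ℕ} (m : Finset (Fin n)) : Type :=
  {w : Idx d n // (w.val \ m).card = 1}

/-- The inclusion of the polynomial subring on the basic variables,
`𝕜[x_w : w basic] → R̄₀`. -/
noncomputable def basicIncl (𝕜 : Type) [Field 𝕜] (d : ℕ) {n : ℕ} (m : Finset (Fin n)) :
    MvPolynomial (Basic d m) 𝕜 →ₐ[𝕜] MvPolynomial (BIdx d m) 𝕜 :=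
  rename fun b => ⟨b.1, fun h => by have hb := b.2; rw [h] at hb; simp at hb⟩

/-- The ideal `⟨F̄_{m,u} : u ∈ Iᵐ_{d,n}⟩ ⊆ R̄₀` generated by all dehomogenized
`m`-primary Plücker relations. -/
noncomputable def primaryIdeal (𝕜 : Type) [Field 𝕜] (d : ℕ) {n : ℕ} (m : Finset (Fin n)) :
    Ideal (MvPolynomial (BIdx d m) 𝕜) :=
  Ideal.span {f | ∃ u : Finset (Fin n), u.card = d ∧ 2 ≤ (u \ m).card ∧
    f = dehom 𝕜 d m (Fmu 𝕜 d m u)}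

end Resolution

open Function

namespace MvPolynomial

section Triangular

variable {R σ β : Type*} [CommRing R] (ι : β → σ) (r : σ → ℕ) (g : σ → MvPolynomial σ R)

noncomputable def triangularIdeal : Ideal (MvPolynomial σ R) :=
  Ideal.span ((fun v => X v - g v) '' (Set.range ι)ᶜ)

open Classical in
/-- The guard `r w < r v` only makes the recursion well founded: when `g v` is supported on
variables of smaller rank it cuts nothing off (`solveTriangular_eq_aeval`). -/
noncomputable def solveTriangular (v : σ) : MvPolynomial β R :=
  if h : ∃ b, ι b = v then X h.choose
  else aeval (fun w => if r w < r v then solveTriangular w else 0) (g v)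
termination_by r v

variable {ι r g}

theorem solveTriangular_apply (hι : Injective ι) (b : β) :
    solveTriangular ι r g (ι b) = X b := by
  have h : ∃ b', ι b' = ι b := ⟨b, rfl⟩
  rw [solveTriangular, dif_pos h, hι h.choose_spec]

theorem solveTriangular_eq_aeval {v : σ} (hv : v ∉ Set.range ι)
    (hg : g v ∈ supported R {w | r w < r v}) :
    solveTriangular ι r g v = aeval (solveTriangular ι r g) (g v) := by
  rw [solveTriangular, dif_neg (show ¬∃ b, ι b = v from hv)]
  refine hom_congr_vars (by ext; simp) (fun w hw _ => ?_) rfl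
  have hw : r w < r v := mem_supported.mp hg hw
  simp [hw]

theorem aeval_solveTriangular_eq_zero_of_mem
    (hg : ∀ v ∉ Set.range ι, g v ∈ supported R {w | r w < r v})
    {p : MvPolynomial σ R} (hp : p ∈ triangularIdeal ι g) :
    aeval (solveTriangular ι r g) p = 0 := by
  refine RingHom.mem_ker.mp (Ideal.span_le.mpr ?_ hp)
  rintro _ ⟨v, hv, rfl⟩
  rw [SetLike.mem_coe, RingHom.mem_ker, map_sub, aeval_X,
    ← solveTriangular_eq_aeval hv (hg v hv), sub_self]

theorem mkₐ_rename_solveTriangular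
    (hg : ∀ v ∉ Set.range ι, g v ∈ supported R {w | r w < r v})
    (hι : Injective ι) (v : σ) :
    Ideal.Quotient.mkₐ R (triangularIdeal ι g) (rename ι (solveTriangular ι r g v)) =
      Ideal.Quotient.mkₐ R (triangularIdeal ι g) (X v) := by
  by_cases hb : v ∈ Set.range ι
  · obtain ⟨b, rfl⟩ := hb
    rw [solveTriangular_apply hι, rename_X]
  have hXg : X v - g v ∈ triangularIdeal ι g := Ideal.subset_span ⟨v, hb, rfl⟩
  calc _ = aeval (fun w => Ideal.Quotient.mkₐ R (triangularIdeal ι g)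
          (rename ι (solveTriangular ι r g w))) (g v) := by
        rw [solveTriangular_eq_aeval hb (hg v hb), comp_aeval_apply, comp_aeval_apply]
    _ = aeval (fun w => Ideal.Quotient.mkₐ R (triangularIdeal ι g) (X w)) (g v) := by
        refine hom_congr_vars (by ext; simp) (fun w hw _ => ?_) rfl
        have : r w < r v := mem_supported.mp (hg v hb) hw
        simpa using mkₐ_rename_solveTriangular hg hι w
    _ = _ := by
        rw [← comp_aeval_apply, aeval_X_left_apply, eq_comm]
        exact Ideal.Quotient.eq.mpr hXg
termination_by r v

theorem bijective_mkₐ_comp_rename_of_triangular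
    (hg : ∀ v ∉ Set.range ι, g v ∈ supported R {w | r w < r v})
    (hι : Injective ι) :
    Bijective ((Ideal.Quotient.mkₐ R (triangularIdeal ι g)).comp (rename ι)) := by
  refine (AlgEquiv.ofAlgHom ((Ideal.Quotient.mkₐ R _).comp (rename ι))
    (Ideal.Quotient.liftₐ _ (aeval (solveTriangular ι r g))
      fun _ => aeval_solveTriangular_eq_zero_of_mem hg) ?_ ?_).bijective
  · refine Ideal.Quotient.algHom_ext R (algHom_ext fun v => ?_)
    rw [AlgHom.comp_assoc, Ideal.Quotient.liftₐ_comp, AlgHom.comp_apply, AlgHom.comp_apply,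
      aeval_X]
    exact mkₐ_rename_solveTriangular hg hι v
  · refine algHom_ext fun b => ?_
    rw [← AlgHom.comp_assoc, Ideal.Quotient.liftₐ_comp, AlgHom.comp_apply, rename_X, aeval_X,
      solveTriangular_apply hι, AlgHom.id_apply]

theorem bijective_mkₐ_comp_rename_of_unit_triangular (hι : Injective ι)
    (f : σ → MvPolynomial σ R)
    (hf : ∀ v ∉ Set.range ι, ∃ c : Rˣ, f v - (c : R) • X v ∈ supported R {w | r w < r v}) :
    Bijective ((Ideal.Quotient.mkₐ R (Ideal.span (f '' (Set.range ι)ᶜ))).comp (rename ι)) := by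
  choose! c hc using hf
  have hspan : Ideal.span (f '' (Set.range ι)ᶜ) =
      triangularIdeal ι (fun v => X v - (↑(c v)⁻¹ : R) • f v) := by
    simp only [triangularIdeal, sub_sub_cancel]
    apply le_antisymm <;> refine Ideal.span_le.mpr ?_ <;> rintro _ ⟨v, hv, rfl⟩
    · rw [SetLike.mem_coe, ← one_smul R (f v), ← Units.mul_inv (c v), mul_smul]
      exact Submodule.smul_of_tower_mem _ _ (Ideal.subset_span ⟨v, hv, rfl⟩)
    · exact Submodule.smul_of_tower_mem _ _ (Ideal.subset_span ⟨v, hv, rfl⟩)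
  rw [hspan]
  refine bijective_mkₐ_comp_rename_of_triangular (r := r) (fun v hv => ?_) hι
  have hXf : X v - (↑(c v)⁻¹ : R) • f v = -(↑(c v)⁻¹ : R) • (f v - (c v : R) • X v) := by
    rw [neg_smul, smul_sub, smul_smul, Units.inv_mul, one_smul, neg_sub]
  rw [hXf]
  exact Subalgebra.smul_mem _ (hc v hv) _

end Triangular

end MvPolynomial

theorem Finset.card_insert_erase_sdiff_lt {α : Type*} [DecidableEq α] {u m : Finset α} {a c : α}
    (ha : a ∈ u \ m) (hc : c ∈ m) : (insert c (u.erase a) \ m).card < (u \ m).card := by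
  rw [Finset.insert_sdiff_of_mem _ hc, Finset.erase_sdiff_comm]
  exact Finset.card_erase_lt_of_mem ha

theorem Finset.card_insert_erase_sdiff_self_le_one {α : Type*} [DecidableEq α] (m : Finset α)
    (a c : α) : (insert a (m.erase c) \ m).card ≤ 1 := by
  refine (Finset.card_le_card fun x => ?_).trans (Finset.card_singleton a).le
  simp only [Finset.mem_sdiff, Finset.mem_insert, Finset.mem_erase, Finset.mem_singleton]
  tauto

theorem Finset.insert_erase_sdiff_self {α : Type*} [DecidableEq α] {m : Finset α} {a : α}
    (c : α) (ha : a ∉ m) : insert a (m.erase c) \ m = {a} := by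
  ext x
  simp only [Finset.mem_sdiff, Finset.mem_insert, Finset.mem_erase, Finset.mem_singleton]
  grind

theorem Finset.sdiff_insert_erase_self {α : Type*} [DecidableEq α] {m : Finset α} {a c : α}
    (hc : c ∈ m) (ha : a ∉ m) : m \ insert a (m.erase c) = {c} := by
  ext x
  simp only [Finset.mem_sdiff, Finset.mem_insert, Finset.mem_erase, Finset.mem_singleton]
  grind

theorem Finset.eq_insert_erase_of_sdiff_eq_singleton {α : Type*} [DecidableEq α]
    {w m : Finset α} {a c : α} (ha : w \ m = {a}) (hc : m \ w = {c}) :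
    w = insert a (m.erase c) := by
  ext x
  have hxa := congrArg (x ∈ ·) ha
  have hxc := congrArg (x ∈ ·) hc
  simp only [Finset.mem_sdiff, Finset.mem_singleton, eq_iff_iff] at hxa hxc
  simp only [Finset.mem_insert, Finset.mem_erase]
  grind

theorem Ideal.isPrime_of_bijective_toQuotient {A B F : Type*} [CommRing A] [IsDomain A]
    [CommRing B] {I : Ideal B} [FunLike F A (B ⧸ I)] [RingHomClass F A (B ⧸ I)] {f : F}
    (hf : Bijective f) : I.IsPrime :=
  (Ideal.Quotient.isDomain_iff_prime I).mp ((RingEquiv.ofBijective f hf).symm.toMulEquiv.isDomain A)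

namespace Resolution

section Chart

variable {𝕜 : Type} [Field 𝕜] {d n : ℕ} {m : Finset (Fin n)}

def basicEmb (b : Basic d m) : BIdx d m :=
  ⟨b.1, fun h => by have hb := b.2; rw [h] at hb; simp at hb⟩

theorem basicIncl_eq_rename : basicIncl 𝕜 d m = rename basicEmb := rfl

theorem basicEmb_injective : Injective (basicEmb (d := d) (m := m)) :=
  fun _ _ h => Subtype.ext (congrArg (fun v : BIdx d m => v.1) h)

theorem mem_range_basicEmb {v : BIdx d m} : v ∈ Set.range basicEmb ↔ (v.1.1 \ m).card = 1 :=
  ⟨fun ⟨b, hb⟩ => hb ▸ b.2, fun h => ⟨⟨v.1, h⟩, rfl⟩⟩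

theorem two_le_card_sdiff_of_notMem_range_basicEmb (hm : m.card = d) {v : BIdx d m}
    (hv : v ∉ Set.range basicEmb) : 2 ≤ (v.1.1 \ m).card := by
  have hne : (v.1.1 \ m).Nonempty := Finset.sdiff_nonempty.mpr fun hsub =>
    v.2 (Finset.eq_of_subset_of_card_le hsub (by rw [hm, v.1.2]))
  have := hne.card_pos
  have := mt mem_range_basicEmb.mpr hv
  omega

theorem dehom_X_mem_supported (w : Idx d n) :
    dehom 𝕜 d m (X w) ∈ supported 𝕜 {v : BIdx d m | v.1.1 = w.1} := by
  rw [dehom, aeval_X]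
  split_ifs with h
  · exact Subalgebra.one_mem _
  · exact (X_mem_supported (R := 𝕜)).mpr rfl

theorem dehom_pApp_mem_supported (S : Finset (Fin n)) (a : Fin n) :
    dehom 𝕜 d m (pApp 𝕜 d S a) ∈ supported 𝕜 {v : BIdx d m | v.1.1 = insert a S} := by
  rw [pApp]
  split_ifs with h
  · rw [map_smul]; exact Subalgebra.smul_mem _ (dehom_X_mem_supported ⟨_, h.2⟩) _
  · rw [map_zero]; exact Subalgebra.zero_mem _

theorem dehom_pPre_mem_supported (a : Fin n) (S : Finset (Fin n)) :
    dehom 𝕜 d m (pPre 𝕜 d a S) ∈ supported 𝕜 {v : BIdx d m | v.1.1 = insert a S} := by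
  rw [pPre]
  split_ifs with h
  · rw [map_smul]; exact Subalgebra.smul_mem _ (dehom_X_mem_supported ⟨_, h.2⟩) _
  · rw [map_zero]; exact Subalgebra.zero_mem _

theorem dehom_pApp_of_notMem {S : Finset (Fin n)} {a : Fin n} (ha : a ∉ S) (v : BIdx d m)
    (hv : v.1.1 = insert a S) :
    dehom 𝕜 d m (pApp 𝕜 d S a) = ((-1 : 𝕜) ^ (S.filter fun x => a < x).card) • X v := by
  have hcard : (insert a S).card = d := hv ▸ v.1.2
  have hne : insert a S ≠ m := hv ▸ v.2
  have hw : (⟨⟨insert a S, hcard⟩, hne⟩ : BIdx d m) = v := Subtype.ext (Subtype.ext hv.symm)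
  rw [pApp, dif_pos ⟨ha, hcard⟩, map_smul, dehom, aeval_X, dif_neg hne, hw]

theorem dehom_X_self (hm : m.card = d) : dehom 𝕜 d m (X ⟨m, hm⟩) = 1 := by
  rw [dehom, aeval_X, dif_pos rfl]

theorem exists_unit_dehom_Fmu_sub_smul_X_mem_supported (hm : m.card = d) (v : BIdx d m)
    (hv : 2 ≤ (v.1.1 \ m).card) :
    ∃ c : 𝕜ˣ, dehom 𝕜 d m (Fmu 𝕜 d m v.1.1) - (c : 𝕜) • X v ∈
      supported 𝕜 {w : BIdx d m | (w.1.1 \ m).card < (v.1.1 \ m).card} := by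
  have hne : (v.1.1 \ m).Nonempty := Finset.card_pos.mp (by omega)
  set u0 := (v.1.1 \ m).min' hne
  have hu0 : u0 ∈ v.1.1 \ m := Finset.min'_mem _ _
  rw [Fmu, dif_pos ⟨hm, v.1.2, hv⟩]
  refine ⟨(-1) ^ ((v.1.1.erase u0).filter fun x => u0 < x).card, ?_⟩
  rw [map_add, map_mul, dehom_X_self, one_mul,
    dehom_pApp_of_notMem (Finset.notMem_erase _ _) v
      (Finset.insert_erase (Finset.mem_sdiff.mp hu0).1).symm,
    Units.val_pow_eq_pow_val, Units.val_neg, Units.val_one, add_sub_cancel_left, map_sum]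
  refine Subalgebra.sum_mem _ fun i _ => ?_
  rw [map_smul, map_mul]
  refine Subalgebra.smul_mem _ (Subalgebra.mul_mem _ ?_ ?_) _
  · refine supported_mono ?_ (dehom_pApp_mem_supported _ _)
    rintro w (hw : w.1.1 = _)
    simp only [Set.mem_ofPred_eq, hw]
    exact Finset.card_insert_erase_sdiff_lt hu0 (m.orderIsoOfFin hm i).2
  · refine supported_mono ?_ (dehom_pPre_mem_supported _ _)
    rintro w (hw : w.1.1 = _)
    simp only [Set.mem_ofPred_eq, hw]
    exact (Finset.card_insert_erase_sdiff_self_le_one _ _ _).trans_lt (by omega)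

theorem primaryIdeal_eq_span (hm : m.card = d) :
    primaryIdeal 𝕜 d m = Ideal.span
      ((fun v : BIdx d m => dehom 𝕜 d m (Fmu 𝕜 d m v.1.1)) '' (Set.range basicEmb)ᶜ) := by
  rw [primaryIdeal]
  congr 1
  ext f
  constructor
  · rintro ⟨u, hu, h2, rfl⟩
    refine ⟨⟨⟨u, hu⟩, fun h => ?_⟩, fun hb => ?_, rfl⟩
    · subst h
      simp at h2
    · have : (u \ m).card = 1 := mem_range_basicEmb.mp hb
      omega
  · rintro ⟨v, hv, rfl⟩
    exact ⟨v.1.1, v.1.2, two_le_card_sdiff_of_notMem_range_basicEmb hm hv, rfl⟩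

def basicOfPair (hm : m.card = d) (p : m × (mᶜ : Finset (Fin n))) : Basic d m :=
  ⟨⟨insert p.2.1 (m.erase p.1.1), by
      have hp := Finset.mem_compl.mp p.2.2
      rw [Finset.card_insert_of_notMem fun h => hp (Finset.mem_of_mem_erase h),
        Finset.card_erase_of_mem p.1.2]
      have := Finset.card_pos.mpr ⟨_, p.1.2⟩
      omega⟩,
    by rw [Finset.insert_erase_sdiff_self _ (Finset.mem_compl.mp p.2.2),
      Finset.card_singleton]⟩

theorem basicOfPair_bijective (hm : m.card = d) : Bijective (basicOfPair hm) := by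
  constructor
  · rintro ⟨⟨c, hc⟩, ⟨a, ha⟩⟩ ⟨⟨c', hc'⟩, ⟨a', ha'⟩⟩ h
    have hw : insert a (m.erase c) = insert a' (m.erase c') := congrArg (fun w => w.1.1) h
    rw [Finset.mem_compl] at ha ha'
    have hac := congrArg (· \ m) hw
    have hcc := congrArg (m \ ·) hw
    simp only [Finset.insert_erase_sdiff_self c ha, Finset.insert_erase_sdiff_self c' ha',
      Finset.sdiff_insert_erase_self hc ha, Finset.sdiff_insert_erase_self hc' ha',
      Finset.singleton_inj] at hac hcc
    subst hac hcc
    rfl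
  · rintro ⟨⟨w, hw⟩, h1⟩
    obtain ⟨a, ha⟩ := Finset.card_eq_one.mp h1
    obtain ⟨c, hc⟩ := Finset.card_eq_one.mp
      ((Finset.card_sdiff_comm (by rw [hw, hm])).symm.trans h1)
    have hcm : c ∈ m := (Finset.mem_sdiff.mp (hc ▸ Finset.mem_singleton_self c)).1
    have ham : a ∉ m := (Finset.mem_sdiff.mp (ha ▸ Finset.mem_singleton_self a)).2
    exact ⟨(⟨c, hcm⟩, ⟨a, Finset.mem_compl.mpr ham⟩),
      Subtype.ext (Subtype.ext (Finset.eq_insert_erase_of_sdiff_eq_singleton ha hc).symm)⟩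

theorem card_basic (hm : m.card = d) : Nat.card (Basic d m) = d * (n - d) := by
  rw [← Nat.card_eq_of_bijective _ (basicOfPair_bijective hm), Nat.card_prod]
  simp [hm]

end Chart

theorem basic_variables_give_affine_space_general
    (𝕜 : Type) [Field 𝕜] {d n : ℕ}
    (m : Finset (Fin n)) (hm : m.card = d) :
    Function.Bijective
      ((Ideal.Quotient.mkₐ 𝕜 (primaryIdeal 𝕜 d m)).comp (basicIncl 𝕜 d m)) ∧
    (primaryIdeal 𝕜 d m).IsPrime ∧
    Nat.card (Basic d m) = d * (n - d) := by
  have hbij : Function.Bijective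
      ((Ideal.Quotient.mkₐ 𝕜 (primaryIdeal 𝕜 d m)).comp (basicIncl 𝕜 d m)) := by
    rw [primaryIdeal_eq_span hm, basicIncl_eq_rename]
    exact bijective_mkₐ_comp_rename_of_unit_triangular basicEmb_injective _ fun v hv =>
      exists_unit_dehom_Fmu_sub_smul_X_mem_supported hm v
        (two_le_card_sdiff_of_notMem_range_basicEmb hm hv)
  exact ⟨hbij, Ideal.isPrime_of_bijective_toQuotient hbij, card_basic hm⟩

/-- **The chart `U_m ∩ Gr^{d,E}` is an affine space in the basic variables.**
The composite `𝕜`-algebra homomorphism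
`𝕜[x_w : w basic] → R̄₀ → R̄₀/⟨F̄_{m,u} : u ∈ Iᵐ_{d,n}⟩` is an isomorphism.  In particular
the quotient is a polynomial ring over `𝕜` in the `d(n−d)` basic variables, and the ideal
`⟨F̄_{m,u} : u ∈ Iᵐ_{d,n}⟩` is prime. -/
theorem basic_variables_give_affine_space
    (𝕜 : Type) [Field 𝕜] {d n : ℕ} (hd : 1 ≤ d) (hdn : d < n)
    (m : Finset (Fin n)) (hm : m.card = d) :
    Function.Bijective
      ((Ideal.Quotient.mkₐ 𝕜 (primaryIdeal 𝕜 d m)).comp (basicIncl 𝕜 d m)) ∧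
    (primaryIdeal 𝕜 d m).IsPrime ∧
    Nat.card (Basic d m) = d * (n - d) :=
  basic_variables_give_affine_space_general 𝕜 m hm

end Resolution
end

section
/- Let u, v ∈ Iᵐ_{d,n} with v ≠ u and rank(F_{m,v}) ≤ rank(F_{m,u}). Then the leading variable x_u of F̄_{m,u} does not appear in F̄_{m,v}; that is, the degree of the polynomial F̄_{m,v} in the variable x_u is 0. -/
open MvPolynomial

namespace Resolution

variable (𝕜 : Type) [Field 𝕜] (d : ℕ) {n : ℕ}

/-! The nonzero terms of `F_{m,v}` are `p_m p_v` and, for each `a ∈ m \ v`, the product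
`p_{vʳa} p_{v₀(m∖a)}`; their exponents are pairwise distinct, so `rank F_{m,v} = |v \ m| - 2`.
Hence every variable `p_w` of `F_{m,v}` other than `p_m`, `p_v` has `|w \ m| = |v \ m| - 1`
or `|w \ m| = 1`, and for `w = u` both are excluded by `|v \ m| ≤ |u \ m|` and `|u \ m| ≥ 2`. -/

open Finset Function

theorem support_sum_eq_image_of_eq_monomial {ι σ R : Type*} [Fintype ι] [CommSemiring R]
    [DecidableEq σ] {f : ι → MvPolynomial σ R} {e : ι → σ →₀ ℕ} (he : Injective e)
    (hf : ∀ i, ∃ c ≠ 0, f i = monomial (e i) c) :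
    (∑ i, f i).support = univ.image e := by
  choose c hc hf using hf
  ext μ
  simp only [mem_support_iff, coeff_sum, hf, coeff_monomial, mem_image, mem_univ, true_and]
  constructor
  · intro h
    by_contra! hne
    exact h (sum_eq_zero fun i _ => if_neg (hne i))
  · rintro ⟨j, rfl⟩
    rw [sum_eq_single j (fun i _ hij => if_neg (he.ne hij)) (by simp), if_pos rfl]
    exact hc j

section Exchange

variable {d}

def exchange (w : Idx d n) {x y : Fin n} (hx : x ∈ w.1) (hy : y ∉ w.1) : Idx d n :=
  ⟨insert y (w.1.erase x), by
    rw [card_insert_of_notMem fun h => hy (mem_of_mem_erase h), card_erase_add_one hx, w.2]⟩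

variable {w : Idx d n} {x y : Fin n} (hx : x ∈ w.1) (hy : y ∉ w.1)

theorem mem_exchange : y ∈ (exchange w hx hy).1 := mem_insert_self _ _

theorem notMem_exchange : x ∉ (exchange w hx hy).1 := by
  simpa [exchange] using fun h : x = y => hy (h ▸ hx)

theorem exchange_sdiff_of_mem {t : Finset (Fin n)} (hyt : y ∈ t) :
    (exchange w hx hy).1 \ t = (w.1 \ t).erase x := by
  rw [exchange, insert_sdiff_of_mem _ hyt, erase_sdiff_comm]

theorem exchange_sdiff_self : (exchange w hx hy).1 \ w.1 = {y} := by
  rw [exchange, insert_sdiff_of_notMem _ hy, sdiff_eq_empty_iff_subset.2 (erase_subset _ _),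
    insert_empty]

theorem exchange_inj {x' : Fin n} (hx' : x' ∈ w.1) :
    exchange w hx hy = exchange w hx' hy ↔ x = x' := by
  refine ⟨fun h => ?_, fun h => by subst h; rfl⟩
  have h' := congrArg (fun s : Idx d n => s.1.erase y) h
  simp only [exchange] at h'
  have hyS : ∀ s, y ∉ w.1.erase s := fun _ h => hy (mem_of_mem_erase h)
  rwa [erase_insert (hyS x), erase_insert (hyS x'), erase_inj _ hx] at h'

end Exchange

section Dehom

variable {𝕜 d}

theorem degreeOf_dehom_eq_zero {m : Finset (Fin n)} (x : BIdx d m)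
    {p : MvPolynomial (Idx d n) 𝕜} (hx : x.1 ∉ p.vars) : degreeOf x (dehom 𝕜 d m p) = 0 := by
  by_contra h
  rw [← Ne, ← mem_vars_iff_degreeOf_ne_zero, dehom, aeval_eq_bind₁] at h
  obtain ⟨w, hw, hxw⟩ := mem_vars_bind₁ _ p h
  split_ifs at hxw with hwm
  · simp at hxw
  · rw [vars_X, mem_singleton] at hxw
    exact hx (hxw ▸ hw)

end Dehom

section Symbols

variable {𝕜 d} {S : Finset (Fin n)} {a : Fin n}

theorem pApp_of_mem (ha : a ∈ S) : pApp 𝕜 d S a = 0 :=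
  dif_neg fun h => h.1 ha

theorem pApp_eq_monomial (ha : a ∉ S) (w : Idx d n) (hw : insert a S = w.1) :
    pApp 𝕜 d S a = monomial (Finsupp.single w 1) ((-1) ^ #(S.filter (a < ·))) := by
  rw [pApp, dif_pos ⟨ha, hw ▸ w.2⟩, X, smul_monomial, smul_eq_mul, mul_one]
  congr

theorem pPre_eq_monomial (ha : a ∉ S) (w : Idx d n) (hw : insert a S = w.1) :
    pPre 𝕜 d a S = monomial (Finsupp.single w 1) ((-1) ^ #(S.filter (· < a))) := by
  rw [pPre, dif_pos ⟨ha, hw ▸ w.2⟩, X, smul_monomial, smul_eq_mul, mul_one]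
  congr

end Symbols

section Exponents

variable {d} {m u : Finset (Fin n)} (hm : m.card = d) (hu : u.card = d) {u₀ : Fin n}
  (hu₀ : u₀ ∈ u \ m)

/-- Exponents of the terms of `F_{m,u}`: `p_m p_u`, and `p_{uʳmᵢ} p_{u₀(m∖mᵢ)}` for each
`mᵢ ∉ u` (the other terms vanish). -/
noncomputable def relExp : Option {i : Fin d // m.orderEmbOfFin hm i ∉ u} → Idx d n →₀ ℕ
  | none => Finsupp.single ⟨m, hm⟩ 1 + Finsupp.single ⟨u, hu⟩ 1
  | some i => Finsupp.single (exchange ⟨u, hu⟩ (mem_sdiff.1 hu₀).1 i.2) 1 +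
      Finsupp.single (exchange ⟨m, hm⟩ (orderEmbOfFin_mem m hm i) (mem_sdiff.1 hu₀).2) 1

theorem relExp_injective (hu2 : 2 ≤ #(u \ m)) : Injective (relExp hm hu hu₀) := by
  have hBm : ∀ i, exchange ⟨m, hm⟩ (orderEmbOfFin_mem m hm i) (mem_sdiff.1 hu₀).2 ≠ ⟨m, hm⟩ :=
    fun i h => by
      have hu₀B := mem_exchange (w := ⟨m, hm⟩) (orderEmbOfFin_mem m hm i) (mem_sdiff.1 hu₀).2
      rw [h] at hu₀B
      exact (mem_sdiff.1 hu₀).2 hu₀B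
  have hBu : ∀ i, exchange ⟨m, hm⟩ (orderEmbOfFin_mem m hm i) (mem_sdiff.1 hu₀).2 ≠ ⟨u, hu⟩ :=
    fun i h => by
      have hcard := congrArg (fun w : Idx d n => #(w.1 \ m)) h
      rw [exchange_sdiff_self (w := ⟨m, hm⟩), card_singleton] at hcard
      dsimp only at hcard
      omega
  have hBA : ∀ (i j : {i // m.orderEmbOfFin hm i ∉ u}),
      exchange ⟨m, hm⟩ (orderEmbOfFin_mem m hm i) (mem_sdiff.1 hu₀).2 ≠
        exchange ⟨u, hu⟩ (mem_sdiff.1 hu₀).1 j.2 :=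
    fun i j h => notMem_exchange _ _ (congrArg Subtype.val h ▸ mem_exchange _ _)
  rintro (_ | i) (_ | j) h <;>
    simp only [relExp, Finsupp.single_add_single_eq_single_add_single one_ne_zero one_ne_zero] at h
  · rfl
  · rcases h with ⟨-, h⟩ | ⟨-, h, -⟩ | ⟨h, -⟩
    · exact absurd h.symm (hBu j)
    · exact absurd h.symm (hBm j)
    · cases h
  · rcases h with ⟨-, h⟩ | ⟨-, -, h⟩ | ⟨h, -⟩
    · exact absurd h (hBu i)
    · exact absurd h (hBm i)
    · cases h
  · rcases h with ⟨-, h⟩ | ⟨-, -, h⟩ | ⟨h, -⟩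
    · rw [exchange_inj, (m.orderEmbOfFin hm).injective.eq_iff] at h
      exact congrArg some (Subtype.ext h)
    · exact absurd h (hBA i j)
    · cases h

theorem card_orderEmbOfFin_notMem :
    Fintype.card {i : Fin d // m.orderEmbOfFin hm i ∉ u} = #(m \ u) := by
  rw [Fintype.card_subtype, ← card_map (m.orderEmbOfFin hm).toEmbedding]
  congr 1
  ext x
  simp only [mem_map, mem_filter, mem_univ, true_and, mem_sdiff]
  constructor
  · rintro ⟨i, hi, rfl⟩
    exact ⟨orderEmbOfFin_mem m hm i, hi⟩
  · rintro ⟨hxm, hxu⟩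
    obtain ⟨i, rfl⟩ : x ∈ Set.range (m.orderEmbOfFin hm) := by rwa [range_orderEmbOfFin]
    exact ⟨i, hxu, rfl⟩

end Exponents

section PrimaryRelation

variable {𝕜 d} {m u : Finset (Fin n)}

variable (𝕜) in
theorem support_Fmu (hm : #m = d) (hu : #u = d) (hu2 : 2 ≤ #(u \ m)) :
    ∃ (u₀ : Fin n) (hu₀ : u₀ ∈ u \ m),
      (Fmu 𝕜 d m u).support = univ.image (relExp hm hu hu₀) := by
  set u₀ := (u \ m).min' (card_pos.1 (by omega))
  have hu₀ : u₀ ∈ u \ m := min'_mem _ _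
  set φ := m.orderEmbOfFin hm
  set term : Fin d → MvPolynomial (Idx d n) 𝕜 := fun i => (-1 : 𝕜) ^ ((i : ℕ) + 1) •
    (pApp 𝕜 d (u.erase u₀) (φ i) * pPre 𝕜 d u₀ (m.erase (φ i)))
  have hF : Fmu 𝕜 d m u = X ⟨m, hm⟩ * pApp 𝕜 d (u.erase u₀) u₀ +
      ∑ i : {i // φ i ∉ u}, term i := by
    have hFmu : Fmu 𝕜 d m u = X ⟨m, hm⟩ * pApp 𝕜 d (u.erase u₀) u₀ + ∑ i, term i := by
      rw [Fmu, dif_pos ⟨hm, hu, hu2⟩]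
      simp only [coe_orderIsoOfFin_apply]
      rfl
    rw [hFmu, ← Fintype.sum_subtype_add_sum_subtype (fun i => φ i ∉ u) term,
      Fintype.sum_eq_zero (fun i : {i // ¬φ i ∉ u} => term i) fun i => ?_, add_zero]
    have hi : φ i ∈ u.erase u₀ :=
      mem_erase.2 ⟨fun h => (mem_sdiff.1 hu₀).2 (h ▸ orderEmbOfFin_mem m hm i), not_not.1 i.2⟩
    simp only [term, pApp_of_mem hi, zero_mul, smul_zero]
  refine ⟨u₀, hu₀, ?_⟩
  convert support_sum_eq_image_of_eq_monomial (relExp_injective hm hu hu₀ hu2)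
    (f := fun j => Option.elim j (X ⟨m, hm⟩ * pApp 𝕜 d (u.erase u₀) u₀)
      fun i : {i // φ i ∉ u} => term i) ?_
  · rw [hF, Fintype.sum_option]
    rfl
  have hu₀u := (mem_sdiff.1 hu₀).1
  have hu₀m := (mem_sdiff.1 hu₀).2
  rintro (_ | i)
  · rw [Option.elim, pApp_eq_monomial (notMem_erase _ _) ⟨u, hu⟩ (insert_erase hu₀u), X,
      monomial_mul, one_mul]
    exact ⟨_, by simp, rfl⟩
  · simp only [Option.elim, term]
    rw [pApp_eq_monomial (fun h => i.2 (mem_of_mem_erase h))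
      (exchange ⟨u, hu⟩ hu₀u i.2) rfl, pPre_eq_monomial (fun h => hu₀m (mem_of_mem_erase h))
      (exchange ⟨m, hm⟩ (orderEmbOfFin_mem m hm i) hu₀m) rfl, monomial_mul, smul_monomial]
    exact ⟨_, by simp, rfl⟩

variable (𝕜) in
theorem rank_Fmu (hm : #m = d) (hu : #u = d) (hu2 : 2 ≤ #(u \ m)) :
    rank (Fmu 𝕜 d m u) = #(u \ m) - 2 := by
  obtain ⟨u₀, hu₀, h⟩ := support_Fmu 𝕜 hm hu hu2
  rw [rank, h, card_image_of_injective _ (relExp_injective hm hu hu₀ hu2), card_univ,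
    Fintype.card_option, card_orderEmbOfFin_notMem, card_sdiff_comm (hm.trans hu.symm)]
  omega

variable (𝕜) in
theorem mem_vars_Fmu (hm : #m = d) (hu : #u = d) (hu2 : 2 ≤ #(u \ m)) {w : Idx d n}
    (hw : w ∈ (Fmu 𝕜 d m u).vars) :
    w.1 = m ∨ w.1 = u ∨ #(w.1 \ m) + 1 = #(u \ m) ∨ #(w.1 \ m) = 1 := by
  obtain ⟨u₀, hu₀, h⟩ := support_Fmu 𝕜 hm hu hu2
  obtain ⟨e, he, hwe⟩ := (mem_vars_iff_mem_support _).1 hw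
  rw [h] at he
  obtain ⟨j, -, rfl⟩ := mem_image.1 he
  rcases j with _ | i <;>
    have hw' := Finsupp.support_single_add_single_subset hwe <;>
    simp only [mem_insert, mem_singleton] at hw'
  · rcases hw' with rfl | rfl
    · exact Or.inl rfl
    · exact Or.inr (Or.inl rfl)
  · rcases hw' with rfl | rfl
    · refine Or.inr (Or.inr (Or.inl ?_))
      rw [exchange_sdiff_of_mem _ _ (orderEmbOfFin_mem m hm i), card_erase_add_one hu₀]
    · refine Or.inr (Or.inr (Or.inr ?_))
      rw [exchange_sdiff_self (w := ⟨m, hm⟩), card_singleton]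

end PrimaryRelation

theorem leading_variable_not_in_lower_rank_general
    (𝕜 : Type) [Field 𝕜] {d n : ℕ}
    (m u v : Finset (Fin n)) (hm : m.card = d)
    (hu : u.card = d) (hu2 : 2 ≤ (u \ m).card) (hum : u ≠ m)
    (hv : v.card = d) (hv2 : 2 ≤ (v \ m).card)
    (hvu : v ≠ u)
    (hrank : rank (Fmu 𝕜 d m v) ≤ rank (Fmu 𝕜 d m u)) :
    MvPolynomial.degreeOf (⟨⟨u, hu⟩, hum⟩ : BIdx d m) (dehom 𝕜 d m (Fmu 𝕜 d m v)) = 0 := by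
  have hle : #(v \ m) ≤ #(u \ m) := by
    rw [rank_Fmu 𝕜 hm hu hu2, rank_Fmu 𝕜 hm hv hv2] at hrank
    omega
  refine degreeOf_dehom_eq_zero _ fun hx => ?_
  rcases mem_vars_Fmu 𝕜 hm hv hv2 hx with h | h | h | h
  · exact hum h
  · exact hvu h.symm
  all_goals
    dsimp only at h
    omega

/-- **The leading variable of `F̄_{m,u}` does not appear in relations of lower or equal
rank.**  Let `u, v ∈ Iᵐ_{d,n}` with `v ≠ u` and `rank F_{m,v} ≤ rank F_{m,u}`.  Then the
leading variable `x_u` of the dehomogenized relation `F̄_{m,u}` does not appear in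
`F̄_{m,v}`, i.e. the degree of `F̄_{m,v}` in the variable `x_u` is `0`. -/
theorem leading_variable_not_in_lower_rank
    (𝕜 : Type) [Field 𝕜] {d n : ℕ} (hd : 1 ≤ d) (hdn : d < n)
    (m u v : Finset (Fin n)) (hm : m.card = d)
    (hu : u.card = d) (hu2 : 2 ≤ (u \ m).card) (hum : u ≠ m)
    (hv : v.card = d) (hv2 : 2 ≤ (v \ m).card)
    (hvu : v ≠ u)
    (hrank : rank (Fmu 𝕜 d m v) ≤ rank (Fmu 𝕜 d m u)) :
    MvPolynomial.degreeOf (⟨⟨u, hu⟩, hum⟩ : BIdx d m) (dehom 𝕜 d m (Fmu 𝕜 d m v)) = 0 :=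
  leading_variable_not_in_lower_rank_general 𝕜 m u v hm hu hu2 hum hv hv2 hvu hrank

end Resolution
end

section
/- Let u ∈ Iᵐ_{d,n} and F = F_{m,u}. For any two distinct s, t ∈ S_F, the two-element sets {u_s, v_s} and {u_t, v_t} of elements of I_{d,n} are disjoint. In particular, within the fixed m-primary relation F, each index u_s occurring in a term determines its partner v_s, and vice versa. -/
open MvPolynomial

namespace Resolution

variable (𝕜 : Type) [Field 𝕜] (d : ℕ) {n : ℕ}

open Finset

/-!
With `u₀ = min (u \ m)`, the index pairs of the terms of `F_{m,u}` are `{u, m}` and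
`{uʳ ∪ {x}, {u₀} ∪ (m \ {x})}` for `x ∈ m \ u`. Fix a second element `y ≠ u₀` of `u \ m`: it lies
in the first index of every pair and in neither second one, so two pairs can only share an index
in the same position. An index then determines its partner: `u₀` separates `u` from the sets
`uʳ ∪ {x}` and `m` from the sets `{u₀} ∪ (m \ {x})`, and `x` is recovered as the element of the
first index outside `u`, resp. the element of `m` missing from the second.
-/

section IndexPairs

variable {α : Type*} [DecidableEq α] {m u v w v' w' : Finset α} {u₀ y : α}

/-- `p_v p_w` is, up to sign, a term of `F_{m,u}` (with `u₀ = min (u \ m)`): the leading term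
`p_u p_m`, or `p_{uʳx} p_{u₀(m∖x)}` for some `x ∈ m` outside `u` (the summands with `x ∈ u`
vanish). -/
def IsFmuTerm (m u : Finset α) (u₀ : α) (v w : Finset α) : Prop :=
  (v = u ∧ w = m) ∨ ∃ x ∈ m, x ∉ u ∧ v = insert x (u.erase u₀) ∧ w = insert u₀ (m.erase x)

lemma IsFmuTerm.mem_left_and_not_mem_right (hy : y ∈ u \ m) (hyu₀ : y ≠ u₀)
    (h : IsFmuTerm m u u₀ v w) : y ∈ v ∧ y ∉ w := by
  rw [mem_sdiff] at hy
  rcases h with ⟨rfl, rfl⟩ | ⟨x, -, -, rfl, rfl⟩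
  · exact hy
  · simp [hy.1, hy.2, hyu₀]

lemma IsFmuTerm.ne (hy : y ∈ u \ m) (hyu₀ : y ≠ u₀) (h : IsFmuTerm m u u₀ v w) : v ≠ w := by
  obtain ⟨hyv, hyw⟩ := h.mem_left_and_not_mem_right hy hyu₀
  exact fun hvw => hyw (hvw ▸ hyv)

lemma IsFmuTerm.right_eq_of_left_eq (hu₀ : u₀ ∈ u \ m) (h : IsFmuTerm m u u₀ v w)
    (h' : IsFmuTerm m u u₀ v w') : w = w' := by
  rw [mem_sdiff] at hu₀
  have hu₀_not_mem {x : α} (hx : x ∈ m) : u₀ ∉ insert x (u.erase u₀) := by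
    have hxu₀ : u₀ ≠ x := fun h => hu₀.2 (h ▸ hx)
    simp [hxu₀]
  rcases h with ⟨hv, hw⟩ | ⟨x, hxm, hxu, hv, hw⟩ <;>
    rcases h' with ⟨hv', hw'⟩ | ⟨x', hx'm, -, hv', hw'⟩ <;> subst v w w'
  · rfl
  · exact (hu₀_not_mem hx'm (by rw [← hv']; exact hu₀.1)).elim
  · exact (hu₀_not_mem hxm (by rw [hv']; exact hu₀.1)).elim
  · have hx : x ∈ insert x' (u.erase u₀) := hv' ▸ mem_insert_self x _
    obtain rfl : x = x' := by simpa [hxu] using hx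
    rfl

lemma IsFmuTerm.left_eq_of_right_eq (hu₀ : u₀ ∉ m) (h : IsFmuTerm m u u₀ v w)
    (h' : IsFmuTerm m u u₀ v' w) : v = v' := by
  rcases h with ⟨hv, hw⟩ | ⟨x, hxm, -, hv, hw⟩ <;>
    rcases h' with ⟨hv', hw'⟩ | ⟨x', hx'm, -, hv', hw'⟩ <;> subst v v' w
  · rfl
  · exact absurd (hw' ▸ mem_insert_self u₀ _) hu₀
  · exact absurd (hw' ▸ mem_insert_self u₀ _) hu₀
  · have hx' : x' ∉ insert u₀ (m.erase x') := by
      have hx'u₀ : x' ≠ u₀ := fun h => hu₀ (h ▸ hx'm)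
      simp [hx'u₀]
    obtain rfl : x = x' := by
      by_contra hne
      exact hx' (hw' ▸ mem_insert_of_mem (mem_erase.2 ⟨Ne.symm hne, hx'm⟩))
    rfl

lemma IsFmuTerm.eq_of_common (hu₀ : u₀ ∈ u \ m) (hy : y ∈ u \ m) (hyu₀ : y ≠ u₀)
    (h : IsFmuTerm m u u₀ v w) (h' : IsFmuTerm m u u₀ v' w') {z : Finset α}
    (hz : z = v ∨ z = w) (hz' : z = v' ∨ z = w') : v = v' ∧ w = w' := by
  have hy₁ := h.mem_left_and_not_mem_right hy hyu₀
  have hy₂ := h'.mem_left_and_not_mem_right hy hyu₀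
  rcases hz with rfl | rfl <;> rcases hz' with hz' | hz'
  · subst hz'
    exact ⟨rfl, h.right_eq_of_left_eq hu₀ h'⟩
  · exact absurd (hz' ▸ hy₁.1) hy₂.2
  · exact absurd (hz' ▸ hy₂.1) hy₁.2
  · subst hz'
    exact ⟨h.left_eq_of_right_eq (mem_sdiff.1 hu₀).2 h', rfl⟩

end IndexPairs

lemma eq_single_of_mem_support_smul_X {σ R : Type*} [CommSemiring R] [Nontrivial R] {c : R}
    {i : σ} {s : σ →₀ ℕ} (hs : s ∈ (c • X i : MvPolynomial σ R).support) :
    s = Finsupp.single i 1 := by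
  simpa [support_X] using support_smul hs

variable {𝕜 d}

lemma mem_support_pApp {S : Finset (Fin n)} {a : Fin n} {s : Idx d n →₀ ℕ}
    (hs : s ∈ (pApp 𝕜 d S a).support) :
    a ∉ S ∧ ∃ w : Idx d n, w.1 = insert a S ∧ s = Finsupp.single w 1 := by
  unfold pApp at hs
  split_ifs at hs with h
  · exact ⟨h.1, _, rfl, eq_single_of_mem_support_smul_X hs⟩
  · simp at hs

lemma mem_support_pPre {a : Fin n} {S : Finset (Fin n)} {s : Idx d n →₀ ℕ}
    (hs : s ∈ (pPre 𝕜 d a S).support) :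
    a ∉ S ∧ ∃ w : Idx d n, w.1 = insert a S ∧ s = Finsupp.single w 1 := by
  unfold pPre at hs
  split_ifs at hs with h
  · exact ⟨h.1, _, rfl, eq_single_of_mem_support_smul_X hs⟩
  · simp at hs

variable (𝕜) in
lemma exists_isFmuTerm_of_mem_support_Fmu {m u : Finset (Fin n)} (hm : m.card = d)
    (hu : u.card = d) (hu2 : 2 ≤ (u \ m).card) :
    ∃ u₀ ∈ u \ m, ∀ s ∈ (Fmu 𝕜 d m u).support, ∃ v w : Idx d n,
      IsFmuTerm m u u₀ v.1 w.1 ∧ s = Finsupp.single v 1 + Finsupp.single w 1 := by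
  refine ⟨_, min'_mem _ (card_pos.mp (lt_of_lt_of_le two_pos hu2)), fun s hs => ?_⟩
  rw [Fmu, dif_pos ⟨hm, hu, hu2⟩] at hs
  set u₀ := (u \ m).min' _
  have hu₀ : u₀ ∈ u \ m := min'_mem _ _
  rcases mem_union.1 (support_add hs) with hs | hs
  · obtain ⟨a, ha, b, hb, rfl⟩ := mem_add.1 (support_mul _ _ hs)
    obtain ⟨-, w, hw, rfl⟩ := mem_support_pApp hb
    refine ⟨w, ⟨m, hm⟩, Or.inl ⟨?_, rfl⟩, ?_⟩
    · rw [hw, insert_erase (mem_sdiff.1 hu₀).1]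
    · rw [support_X, mem_singleton] at ha
      rw [ha, add_comm]
  · obtain ⟨i, -, hi⟩ := mem_biUnion.1 (support_sum hs)
    obtain ⟨a, ha, b, hb, rfl⟩ := mem_add.1 (support_mul _ _ (support_smul hi))
    obtain ⟨hxu, v, hv, rfl⟩ := mem_support_pApp ha
    obtain ⟨-, w, hw, rfl⟩ := mem_support_pPre hb
    have hxm := (m.orderIsoOfFin hm i).2
    have hxu₀ : (m.orderIsoOfFin hm i).1 ≠ u₀ := fun h => (mem_sdiff.1 hu₀).2 (h ▸ hxm)
    exact ⟨v, w, Or.inr ⟨_, hxm, fun h => hxu (mem_erase.2 ⟨hxu₀, h⟩), hv, hw⟩, rfl⟩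

theorem terms_of_Fmu_disjoint_general
    (𝕜 : Type) [Field 𝕜] {d n : ℕ}
    (m u : Finset (Fin n)) (hm : m.card = d) (hu : u.card = d)
    (hu2 : 2 ≤ (u \ m).card) :
    (∀ s ∈ (Fmu 𝕜 d m u).support, s.support.card = 2) ∧
    (∀ s ∈ (Fmu 𝕜 d m u).support, ∀ t ∈ (Fmu 𝕜 d m u).support, s ≠ t →
      Disjoint s.support t.support) := by
  obtain ⟨u₀, hu₀, hterms⟩ := exists_isFmuTerm_of_mem_support_Fmu 𝕜 hm hu hu2
  obtain ⟨y, hy, hyu₀⟩ := exists_mem_ne hu2 u₀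
  have hne {v w : Idx d n} (h : IsFmuTerm m u u₀ v.1 w.1) : v ≠ w :=
    fun hvw => h.ne hy hyu₀ (congrArg Subtype.val hvw)
  have hsupp {v w : Idx d n} (h : IsFmuTerm m u u₀ v.1 w.1) :
      (Finsupp.single v 1 + Finsupp.single w 1).support = {v, w} :=
    Finsupp.support_single_add_single (hne h) one_ne_zero one_ne_zero
  refine ⟨fun s hs => ?_, fun s hs t ht hst => ?_⟩
  · obtain ⟨v, w, h, rfl⟩ := hterms s hs
    rw [hsupp h, card_pair (hne h)]
  · obtain ⟨v, w, h, rfl⟩ := hterms s hs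
    obtain ⟨v', w', h', rfl⟩ := hterms t ht
    rw [hsupp h, hsupp h', disjoint_left]
    intro z hz hz'
    simp only [mem_insert, mem_singleton] at hz hz'
    obtain ⟨hv, hw⟩ := h.eq_of_common hu₀ hy hyu₀ h'
      (hz.imp (congrArg Subtype.val) (congrArg Subtype.val))
      (hz'.imp (congrArg Subtype.val) (congrArg Subtype.val))
    exact hst (by rw [Subtype.ext hv, Subtype.ext hw])

/-- **The index pairs of the terms of an `m`-primary Plücker relation are disjoint.**
Each nonzero term of `F_{m,u}` is (up to sign) a product `p_{u_s} p_{v_s}` of two distinct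
variables (so its monomial is supported on a two-element set `{u_s, v_s} ⊆ I_{d,n}`), and
for distinct terms `s ≠ t` the two-element sets `{u_s, v_s}` and `{u_t, v_t}` are disjoint.
In particular, within `F_{m,u}`, each index `u_s` occurring in a term determines its
partner `v_s`, and vice versa. -/
theorem terms_of_Fmu_disjoint
    (𝕜 : Type) [Field 𝕜] {d n : ℕ} (hd : 1 ≤ d) (hdn : d < n)
    (m u : Finset (Fin n)) (hm : m.card = d) (hu : u.card = d)
    (hu2 : 2 ≤ (u \ m).card) :
    (∀ s ∈ (Fmu 𝕜 d m u).support, s.support.card = 2) ∧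
    (∀ s ∈ (Fmu 𝕜 d m u).support, ∀ t ∈ (Fmu 𝕜 d m u).support, s ≠ t →
      Disjoint s.support t.support) :=
  terms_of_Fmu_disjoint_general 𝕜 m u hm hu hu2

end Resolution
end
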